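/- For every c > 1, the inequality 1 − (1 + √c)²/c + log((1 + √c)²/c) + 2/c > 0 holds; equivalently, 2 > Q_c(1 + √c), where Q_c(1 + √c) = c·h((1 + √c)²/c). -/

import Mathlib

/-! With `t = 1/√c` the left-hand side equals `t² - 2t + 2 log (1 + t)`, which is positive since
`log (1 + t) > t - t²/2` for `t > 0`. As `ψ_c(1 + √c) = (1 + √c)²`, the quantity `2 - Q_c(1 + √c)`
is `c` times that left-hand side. -/

noncomputable section

namespace Spiked

/-- `h(x) = x - 1 - log x`. -/
def hFun (x : ℝ) : ℝ := x - 1 - Real.log x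

/-- `ψ_c(x) = x + c x/(x-1)`. -/
def psiFun (c x : ℝ) : ℝ := x + c * x / (x - 1)

/-- `F_c(x) = h(ψ_c(x))`. -/
def Ffun (c x : ℝ) : ℝ := hFun (psiFun c x)

/-- `Q_c(x) = c · h(ψ_c(x)/c)`. -/
def Qfun (c x : ℝ) : ℝ := c * hFun (psiFun c x / c)

end Spiked

open Spiked

lemma sub_sq_div_two_lt_log_one_add {t : ℝ} (ht : 0 < t) : t - t ^ 2 / 2 < Real.log (1 + t) :=
  calc t - t ^ 2 / 2 = 2 * t / (t + 2) - t ^ 3 / (2 * (t + 2)) := by field_simp; ring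
    _ < 2 * t / (t + 2) := sub_lt_self _ (by positivity)
    _ < Real.log (1 + t) := Real.lt_log_one_add_of_pos ht

lemma psiFun_sq_one_add (s : ℝ) : psiFun (s ^ 2) (1 + s) = (1 + s) ^ 2 := by
  rcases eq_or_ne s 0 with rfl | hs
  · simp [psiFun]
  · rw [psiFun, add_sub_cancel_left]
    field_simp

lemma Qfun_one_add_sqrt {c : ℝ} (hc : 0 ≤ c) :
    Qfun c (1 + √c) = c * hFun ((1 + √c) ^ 2 / c) := by
  have hpsi := psiFun_sq_one_add √c
  rw [Real.sq_sqrt hc] at hpsi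
  rw [Qfun, hpsi]

lemma one_sub_div_sq_add_log_eq {s : ℝ} (hs : s ≠ 0) :
    1 - (1 + s) ^ 2 / s ^ 2 + Real.log ((1 + s) ^ 2 / s ^ 2) + 2 / s ^ 2 =
      (1 / s) ^ 2 - 2 * (1 / s) + 2 * Real.log (1 + 1 / s) := by
  have hsq : (1 + s) ^ 2 / s ^ 2 = (1 + 1 / s) ^ 2 := by field_simp; ring
  rw [hsq, Real.log_pow]
  field_simp
  ring

lemma one_sub_div_add_log_add_two_div_pos {c : ℝ} (hc : 0 < c) :
    0 < 1 - (1 + √c) ^ 2 / c + Real.log ((1 + √c) ^ 2 / c) + 2 / c := by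
  have hs : 0 < √c := Real.sqrt_pos.mpr hc
  have h := one_sub_div_sq_add_log_eq hs.ne'
  rw [Real.sq_sqrt hc.le] at h
  rw [h]
  linarith [sub_sq_div_two_lt_log_one_add (one_div_pos.mpr hs)]

/-- For every `c > 1`, `1 − (1+√c)²/c + log((1+√c)²/c) + 2/c > 0`;
equivalently `2 > Q_c(1+√c) = c·h((1+√c)²/c)`. -/
theorem two_gt_Q_at_threshold (c : ℝ) (hc : 1 < c) :
    0 < 1 - (1 + Real.sqrt c) ^ 2 / c + Real.log ((1 + Real.sqrt c) ^ 2 / c) + 2 / c ∧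
    Qfun c (1 + Real.sqrt c) < 2 ∧
    Qfun c (1 + Real.sqrt c) = c * hFun ((1 + Real.sqrt c) ^ 2 / c) := by
  have hc0 : 0 < c := by linarith
  have hpos := one_sub_div_add_log_add_two_div_pos hc0
  have hQ := Qfun_one_add_sqrt hc0.le
  refine ⟨hpos, ?_, hQ⟩
  have h2 : c * hFun ((1 + √c) ^ 2 / c) =
      2 - c * (1 - (1 + √c) ^ 2 / c + Real.log ((1 + √c) ^ 2 / c) + 2 / c) := by
    rw [hFun]; field_simp; ring
  rw [hQ, h2]
  linarith [mul_pos hc0 hpos]
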